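/- arXiv:1108.5001 — 2 statements merged into one kernel-verified Lean document; each statement's English description precedes it below -/
import Mathlib

section
/- Let f, g : ℝ² → ℝ be Lipschitz and suppose the pair (f, g) restricts to a self-dynamics over [r, R] with constant q (0 < q < r). Let u₀ : [0,∞) → [r+q, R−q] and v₀ : [0,∞) → [r+q, R−q] be continuous. Then: (1) there exist continuous functions u, v : [0,∞) × [0,∞) → ℝ with u(x,0) = u₀(x) and v(0,s) = v₀(s), such that for each fixed x the map s ↦ u(x,s) is differentiable with ∂u/∂s(x,s) = f(v(x,s), u(x,s)) − u(x,s), for each fixed s the map x ↦ v(x,s) is differentiable with ∂v/∂x(x,s) = g(v(x,s), u(x,s)) − v(x,s), and r + q ≤ u(x,s) ≤ R − q and r + q ≤ v(x,s) ≤ R − q for all (x,s); (2) this solution is unique: any two continuous pairs (u,v) satisfying these equations and initial conditions coincide on [0,∞) × [0,∞). -/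
/-!
Clamping the other unknown at `r + q` turns `(f, g)` into a globally Lipschitz pair. The integral
form of its Mealy system is solved by Banach's fixed point theorem on bounded continuous functions
for Bielecki's weighted norm `‖e^{-λ(x+s)} W(x,s)‖∞`, with `λ = K + 1` for a Lipschitz constant `K`
of the vector field: integrating the weight along a segment gains a factor `1/λ`. The self-dynamics
conditions make the vector field point strictly inward on the boundary of `[r + q, R - q]`, so a
comparison argument keeps the solution in this interval, where the clamping does nothing.
Uniqueness comes from the same estimate: on a compact rectangle the maximum `M` of the weighted
difference of two solutions satisfies `M ≤ K M / λ`.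
-/

/-- `(f, g)` restricts to a self-dynamics over `[r, R]` with constant `q`. -/
def RestrictsToSelfDynamics (f g : ℝ → ℝ → ℝ) (r R q : ℝ) : Prop :=
  0 < q ∧ q < r ∧
  (∀ a b : ℝ, 0 < a → b ≤ r + q → q ≤ f a b - b ∧ q ≤ g b a - b) ∧
  (∀ a b : ℝ, 0 < a → R - q ≤ b → f a b - b ≤ -q ∧ g b a - b ≤ -q) ∧
  (∀ a b : ℝ, 0 < a → r ≤ b → b ≤ R → |f a b - b| ≤ R - r ∧ |g b a - b| ≤ R - r)

/-- `(u, v)` is a (continuous) solution of the hyperbolic Mealy system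
`∂u/∂s = f(v,u) − u`, `∂v/∂x = g(v,u) − v` on `[0,∞) × [0,∞)` with initial
values `u(·,0) = u₀` and `v(0,·) = v₀`. -/
def IsMealySolution (f g : ℝ → ℝ → ℝ) (u₀ v₀ : ℝ → ℝ) (u v : ℝ → ℝ → ℝ) : Prop :=
  ContinuousOn (fun pt : ℝ × ℝ => u pt.1 pt.2) (Set.Ici 0 ×ˢ Set.Ici 0) ∧
  ContinuousOn (fun pt : ℝ × ℝ => v pt.1 pt.2) (Set.Ici 0 ×ˢ Set.Ici 0) ∧
  (∀ x : ℝ, 0 ≤ x → u x 0 = u₀ x) ∧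
  (∀ s : ℝ, 0 ≤ s → v 0 s = v₀ s) ∧
  (∀ x : ℝ, 0 ≤ x → ∀ s : ℝ, 0 ≤ s →
    HasDerivWithinAt (fun s' => u x s') (f (v x s) (u x s) - u x s) (Set.Ici 0) s) ∧
  (∀ x : ℝ, 0 ≤ x → ∀ s : ℝ, 0 ≤ s →
    HasDerivWithinAt (fun x' => v x' s) (g (v x s) (u x s) - v x s) (Set.Ici 0) x)

open Set Real NNReal BoundedContinuousFunction

lemma integral_mul_exp_le {a m C lam : ℝ} (hC : 0 ≤ C) (hlam : 0 < lam) :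
    ∫ t in (0 : ℝ)..m, C * exp (lam * (a + t)) ≤ C / lam * exp (lam * (a + m)) := by
  have hderiv : ∀ t ∈ uIcc 0 m,
      HasDerivAt (fun t => C / lam * exp (lam * (a + t))) (C * exp (lam * (a + t))) t := by
    intro t _
    refine ((((hasDerivAt_id' t).const_add a).const_mul lam).exp.const_mul (C / lam)).congr_deriv ?_
    field_simp
  rw [intervalIntegral.integral_eq_sub_of_hasDerivAt hderiv
    (Continuous.intervalIntegrable (by fun_prop) _ _)]
  have : 0 ≤ C / lam * exp (lam * (a + 0)) := by positivity
  linarith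

lemma norm_integral_le_of_norm_le_mul_exp {h : ℝ → ℝ} {a m C lam : ℝ} (hm : 0 ≤ m) (hC : 0 ≤ C)
    (hlam : 0 < lam) (hh : ∀ t ∈ Icc 0 m, ‖h t‖ ≤ C * exp (lam * (a + t))) :
    ‖∫ t in (0 : ℝ)..m, h t‖ ≤ C / lam * exp (lam * (a + m)) :=
  (intervalIntegral.norm_integral_le_of_norm_le hm
    (Filter.Eventually.of_forall fun t ht => hh t (Ioc_subset_Icc_self ht))
    (Continuous.intervalIntegrable (by fun_prop) _ _)).trans (integral_mul_exp_le hC hlam)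

lemma eq_add_integral_of_hasDerivWithinAt {φ h : ℝ → ℝ} (hh : ContinuousOn h (Ici 0))
    (hφ : ∀ s, 0 ≤ s → HasDerivWithinAt φ (h s) (Ici 0) s) {s : ℝ} (hs : 0 ≤ s) :
    φ s = φ 0 + ∫ t in (0 : ℝ)..s, h t := by
  rw [intervalIntegral.integral_eq_sub_of_hasDeriv_right_of_le hs
    (fun t ht => (hφ t ht.1).continuousWithinAt.mono Icc_subset_Ici_self)
    (fun t ht => (hφ t ht.1.le).mono (Ioi_subset_Ici ht.1.le))
    ((hh.mono Icc_subset_Ici_self).intervalIntegrable_of_Icc hs)]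
  ring

lemma hasDerivWithinAt_of_eq_add_integral {φ h : ℝ → ℝ} {c : ℝ} (hh : Continuous h)
    (hφ : ∀ s, 0 ≤ s → φ s = c + ∫ t in (0 : ℝ)..s, h t) {s : ℝ} (hs : 0 ≤ s) :
    HasDerivWithinAt φ (h s) (Ici 0) s :=
  ((hh.integral_hasStrictDerivAt 0 s).hasDerivAt.const_add c).hasDerivWithinAt.congr hφ (hφ s hs)

lemma mem_Icc_of_hasDerivWithinAt {φ φ' : ℝ → ℝ} {lo hi : ℝ}
    (hφ : ∀ s, 0 ≤ s → HasDerivWithinAt φ (φ' s) (Ici 0) s) (h0 : φ 0 ∈ Icc lo hi)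
    (hlo : ∀ s, 0 ≤ s → φ s = lo → 0 < φ' s) (hhi : ∀ s, 0 ≤ s → φ s = hi → φ' s < 0)
    {s : ℝ} (hs : 0 ≤ s) : φ s ∈ Icc lo hi := by
  have hcont : ContinuousOn φ (Icc 0 s) :=
    fun t ht => (hφ t ht.1).continuousWithinAt.mono Icc_subset_Ici_self
  have hderiv : ∀ t ∈ Ico 0 s, HasDerivWithinAt φ (φ' t) (Ici t) t :=
    fun t ht => (hφ t ht.1).mono (Ici_subset_Ici.2 ht.1)
  have hconst : ∀ c : ℝ, ∀ t ∈ Ico 0 s, HasDerivWithinAt (fun _ => c) 0 (Ici t) t :=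
    fun c t _ => hasDerivWithinAt_const t _ c
  exact ⟨image_le_of_deriv_right_lt_deriv_boundary' continuousOn_const (hconst lo) h0.1 hcont
      hderiv (fun t ht h => hlo t ht.1 h.symm) ⟨hs, le_rfl⟩,
    image_le_of_deriv_right_lt_deriv_boundary' hcont hderiv h0.2 continuousOn_const (hconst hi)
      (fun t ht h => hhi t ht.1 h) ⟨hs, le_rfl⟩⟩

/-- The integral form of `∂u/∂s = H₁`, `∂v/∂x = H₂` with data on the axes. Both coordinates are
clamped at `0`, so that `mealyIntegral H` is defined on all of `ℝ²` but only sees `H` on the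
quadrant. -/
noncomputable def mealyIntegral (H : ℝ × ℝ → ℝ × ℝ) (p : ℝ × ℝ) : ℝ × ℝ :=
  (∫ t in (0 : ℝ)..max p.2 0, (H (max p.1 0, t)).1,
    ∫ y in (0 : ℝ)..max p.1 0, (H (y, max p.2 0)).2)

lemma mealyIntegral_of_nonneg (H : ℝ × ℝ → ℝ × ℝ) {x s : ℝ} (hx : 0 ≤ x) (hs : 0 ≤ s) :
    mealyIntegral H (x, s) =
      (∫ t in (0 : ℝ)..s, (H (x, t)).1, ∫ y in (0 : ℝ)..x, (H (y, s)).2) := by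
  simp only [mealyIntegral, max_eq_left hx, max_eq_left hs]

lemma mealyIntegral_max_zero (H : ℝ × ℝ → ℝ × ℝ) (p : ℝ × ℝ) :
    mealyIntegral H p = mealyIntegral H (max p.1 0, max p.2 0) := by
  simp only [mealyIntegral, max_eq_left (le_max_right _ (0 : ℝ))]

lemma continuous_mealyIntegral {H : ℝ × ℝ → ℝ × ℝ} (hH : Continuous H) :
    Continuous (mealyIntegral H) :=
  (intervalIntegral.continuous_parametric_intervalIntegral_of_continuous
      (f := fun (p : ℝ × ℝ) t => (H (max p.1 0, t)).1) (s := fun p => max p.2 0)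
      (by fun_prop) (by fun_prop)).prodMk
    (intervalIntegral.continuous_parametric_intervalIntegral_of_continuous
      (f := fun (p : ℝ × ℝ) y => (H (y, max p.2 0)).2) (s := fun p => max p.1 0)
      (by fun_prop) (by fun_prop))

lemma ContinuousOn.along_snd {α : Type*} [TopologicalSpace α] {H : ℝ × ℝ → α}
    (hH : ContinuousOn H (Ici 0 ×ˢ Ici 0)) {x : ℝ} (hx : 0 ≤ x) :
    ContinuousOn (fun t => H (x, t)) (Ici 0) :=
  hH.comp (by fun_prop) fun _ ht => ⟨hx, ht⟩

lemma ContinuousOn.along_fst {α : Type*} [TopologicalSpace α] {H : ℝ × ℝ → α}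
    (hH : ContinuousOn H (Ici 0 ×ˢ Ici 0)) {s : ℝ} (hs : 0 ≤ s) :
    ContinuousOn (fun y => H (y, s)) (Ici 0) :=
  hH.comp (by fun_prop) fun _ hy => ⟨hy, hs⟩

lemma norm_mealyIntegral_sub_le {H₁ H₂ : ℝ × ℝ → ℝ × ℝ} (h₁ : ContinuousOn H₁ (Ici 0 ×ˢ Ici 0))
    (h₂ : ContinuousOn H₂ (Ici 0 ×ˢ Ici 0)) {C lam : ℝ} (hC : 0 ≤ C) (hlam : 0 < lam)
    {x s : ℝ} (hx : 0 ≤ x) (hs : 0 ≤ s)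
    (hH : ∀ q ∈ Icc 0 x ×ˢ Icc 0 s, ‖H₁ q - H₂ q‖ ≤ C * exp (lam * (q.1 + q.2))) :
    ‖mealyIntegral H₁ (x, s) - mealyIntegral H₂ (x, s)‖ ≤ C / lam * exp (lam * (x + s)) := by
  have hint {H : ℝ × ℝ → ℝ × ℝ} (hH : ContinuousOn H (Ici 0 ×ˢ Ici 0)) :
      IntervalIntegrable (fun t => (H (x, t)).1) MeasureTheory.volume 0 s ∧
        IntervalIntegrable (fun y => (H (y, s)).2) MeasureTheory.volume 0 x :=
    ⟨((continuous_fst.comp_continuousOn (hH.along_snd hx)).mono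
        Icc_subset_Ici_self).intervalIntegrable_of_Icc hs,
      ((continuous_snd.comp_continuousOn (hH.along_fst hs)).mono
        Icc_subset_Ici_self).intervalIntegrable_of_Icc hx⟩
  rw [mealyIntegral_of_nonneg _ hx hs, mealyIntegral_of_nonneg _ hx hs, Prod.mk_sub_mk,
    ← intervalIntegral.integral_sub (hint h₁).1 (hint h₂).1,
    ← intervalIntegral.integral_sub (hint h₁).2 (hint h₂).2, norm_prod_le_iff]
  constructor
  · refine norm_integral_le_of_norm_le_mul_exp hs hC hlam fun t ht => ?_
    exact (norm_fst_le (H₁ (x, t) - H₂ (x, t))).trans (hH (x, t) ⟨⟨hx, le_rfl⟩, ht⟩)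
  · rw [add_comm x]
    refine norm_integral_le_of_norm_le_mul_exp hx hC hlam fun y hy => ?_
    rw [add_comm s]
    exact (norm_snd_le (H₁ (y, s) - H₂ (y, s))).trans (hH (y, s) ⟨hy, ⟨hs, le_rfl⟩⟩)

@[simp]
lemma mealyIntegral_zero : mealyIntegral 0 = 0 := by
  ext p <;> simp [mealyIntegral]

theorem eqOn_of_eq_add_mealyIntegral {N : ℝ × ℝ → ℝ × ℝ} {K : ℝ≥0} (hN : LipschitzWith K N)
    {W₀ W₁ W₂ : ℝ × ℝ → ℝ × ℝ} (hW₁ : ContinuousOn W₁ (Ici 0 ×ˢ Ici 0))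
    (hW₂ : ContinuousOn W₂ (Ici 0 ×ˢ Ici 0))
    (h₁ : ∀ p ∈ Ici 0 ×ˢ Ici 0, W₁ p = W₀ p + mealyIntegral (N ∘ W₁) p)
    (h₂ : ∀ p ∈ Ici 0 ×ˢ Ici 0, W₂ p = W₀ p + mealyIntegral (N ∘ W₂) p) :
    EqOn W₁ W₂ (Ici 0 ×ˢ Ici 0) := by
  rintro ⟨x₀, s₀⟩ ⟨hx₀, hs₀⟩
  set lam : ℝ := K + 1
  have hlam : 0 < lam := by positivity
  set ψ : ℝ × ℝ → ℝ := fun q => ‖W₁ q - W₂ q‖ / exp (lam * (q.1 + q.2))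
  set box := Icc 0 x₀ ×ˢ Icc 0 s₀
  have hbox : box ⊆ Ici 0 ×ˢ Ici 0 := prod_mono Icc_subset_Ici_self Icc_subset_Ici_self
  obtain ⟨p, hp, hmax⟩ := (isCompact_Icc.prod isCompact_Icc).exists_isMaxOn
    ⟨(0, 0), ⟨left_mem_Icc.2 hx₀, left_mem_Icc.2 hs₀⟩⟩
    (((hW₁.sub hW₂).norm.mono hbox).div
      (Continuous.continuousOn (by fun_prop : Continuous fun q : ℝ × ℝ => exp (lam * (q.1 + q.2))))
      fun _ _ => (exp_pos _).ne')
  have hM : 0 ≤ ψ p := by positivity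
  have hbound : ∀ q ∈ box, ‖W₁ q - W₂ q‖ ≤ ψ p * exp (lam * (q.1 + q.2)) :=
    fun q hq => (div_le_iff₀ (exp_pos _)).1 (hmax hq)
  have hp₀ : 0 ≤ p.1 ∧ 0 ≤ p.2 := hbox hp
  have hstep : ‖W₁ p - W₂ p‖ ≤ K * ψ p / lam * exp (lam * (p.1 + p.2)) := by
    rw [h₁ p (hbox hp), h₂ p (hbox hp), add_sub_add_left_eq_sub]
    refine norm_mealyIntegral_sub_le (hN.continuous.comp_continuousOn hW₁)
      (hN.continuous.comp_continuousOn hW₂) (by positivity) hlam hp₀.1 hp₀.2 fun q hq => ?_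
    have hq' : q ∈ box := ⟨⟨hq.1.1, hq.1.2.trans hp.1.2⟩, ⟨hq.2.1, hq.2.2.trans hp.2.2⟩⟩
    calc ‖N (W₁ q) - N (W₂ q)‖ ≤ K * ‖W₁ q - W₂ q‖ := hN.norm_sub_le _ _
      _ ≤ K * (ψ p * exp (lam * (q.1 + q.2))) := by gcongr; exact hbound q hq'
      _ = K * ψ p * exp (lam * (q.1 + q.2)) := by ring
  have hψ : ψ p ≤ K * ψ p / lam := (div_le_iff₀ (exp_pos _)).2 hstep
  have hψ0 : ψ p = 0 := by
    rw [le_div_iff₀ hlam] at hψ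
    nlinarith
  have := hbound (x₀, s₀) ⟨right_mem_Icc.2 hx₀, right_mem_Icc.2 hs₀⟩
  rwa [hψ0, zero_mul, norm_le_zero_iff, sub_eq_zero] at this

noncomputable def expWeight (lam : ℝ) (p : ℝ × ℝ) : ℝ := exp (lam * (max p.1 0 + max p.2 0))

lemma expWeight_pos (lam : ℝ) (p : ℝ × ℝ) : 0 < expWeight lam p := exp_pos _

lemma one_le_expWeight {lam : ℝ} (hlam : 0 ≤ lam) (p : ℝ × ℝ) : 1 ≤ expWeight lam p :=
  one_le_exp (by positivity)

lemma continuous_expWeight (lam : ℝ) : Continuous (expWeight lam) := by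
  unfold expWeight; fun_prop

lemma norm_inv_expWeight_smul_mealyIntegral_sub_le {H₁ H₂ : ℝ × ℝ → ℝ × ℝ}
    (h₁ : ContinuousOn H₁ (Ici 0 ×ˢ Ici 0)) (h₂ : ContinuousOn H₂ (Ici 0 ×ˢ Ici 0))
    {C lam : ℝ} (hC : 0 ≤ C) (hlam : 0 < lam)
    (hH : ∀ q ∈ Ici 0 ×ˢ Ici 0, ‖H₁ q - H₂ q‖ ≤ C * expWeight lam q) (p : ℝ × ℝ) :
    ‖(expWeight lam p)⁻¹ • (mealyIntegral H₁ p - mealyIntegral H₂ p)‖ ≤ C / lam := by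
  have hexp : ∀ q ∈ Ici 0 ×ˢ Ici 0, expWeight lam q = exp (lam * (q.1 + q.2)) := fun q hq => by
    rw [expWeight, max_eq_left hq.1, max_eq_left hq.2]
  have := norm_mealyIntegral_sub_le h₁ h₂ hC hlam (le_max_right p.1 0) (le_max_right p.2 0)
    fun q hq => hexp q ⟨hq.1.1, hq.2.1⟩ ▸ hH q ⟨hq.1.1, hq.2.1⟩
  rw [← mealyIntegral_max_zero, ← mealyIntegral_max_zero] at this
  rw [norm_smul, norm_inv, Real.norm_of_nonneg (expWeight_pos lam p).le,
    inv_mul_le_iff₀ (expWeight_pos lam p), mul_comm]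
  exact this

/-- The Picard map `W ↦ W₀ + mealyIntegral (N ∘ W)` conjugated by the weight: `w` is a fixed point
iff `expWeight lam • w` is a fixed point of the Picard map. -/
noncomputable def weightedPicard (N W₀ : ℝ × ℝ → ℝ × ℝ) (lam : ℝ) (w : ℝ × ℝ → ℝ × ℝ)
    (p : ℝ × ℝ) : ℝ × ℝ :=
  (expWeight lam p)⁻¹ • (W₀ p + mealyIntegral (fun q => N (expWeight lam q • w q)) p)

section weightedPicard

variable {N : ℝ × ℝ → ℝ × ℝ} {K : ℝ≥0} {lam : ℝ}

lemma continuous_weightedPicard (hN : Continuous N) {W₀ w : ℝ × ℝ → ℝ × ℝ}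
    (hW₀ : Continuous W₀) (hw : Continuous w) : Continuous (weightedPicard N W₀ lam w) := by
  have hρ := continuous_expWeight lam
  have hI := continuous_mealyIntegral (hN.comp (hρ.smul hw))
  exact (hρ.inv₀ fun p => (expWeight_pos lam p).ne').smul (hW₀.add hI)

lemma dist_weightedPicard_le (hN : LipschitzWith K N) (hlam : 0 < lam) (W₀ : ℝ × ℝ → ℝ × ℝ)
    (w w' : ℝ × ℝ →ᵇ ℝ × ℝ) (p : ℝ × ℝ) :
    dist (weightedPicard N W₀ lam w p) (weightedPicard N W₀ lam w' p) ≤ K / lam * dist w w' := by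
  have hρ := continuous_expWeight lam
  rw [dist_eq_norm, weightedPicard, weightedPicard, ← smul_sub, add_sub_add_left_eq_sub,
    div_mul_eq_mul_div]
  refine norm_inv_expWeight_smul_mealyIntegral_sub_le (C := K * dist w w')
    (hN.continuous.comp (hρ.smul w.continuous)).continuousOn
    (hN.continuous.comp (hρ.smul w'.continuous)).continuousOn (by positivity) hlam
    (fun q _ => ?_) p
  have hρq := (expWeight_pos lam q).le
  calc ‖N (expWeight lam q • w q) - N (expWeight lam q • w' q)‖
      ≤ K * ‖expWeight lam q • w q - expWeight lam q • w' q‖ := hN.norm_sub_le _ _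
    _ = K * expWeight lam q * dist (w q) (w' q) := by
      rw [← smul_sub, norm_smul, Real.norm_of_nonneg hρq, dist_eq_norm, mul_assoc]
    _ ≤ K * dist w w' * expWeight lam q := by
      rw [mul_right_comm]; gcongr; exact w.dist_coe_le_dist q

lemma norm_weightedPicard_le (hN : LipschitzWith K N) (hlam : 0 < lam) (W₀ : ℝ × ℝ →ᵇ ℝ × ℝ)
    (w : ℝ × ℝ →ᵇ ℝ × ℝ) (p : ℝ × ℝ) :
    ‖weightedPicard N W₀ lam w p‖ ≤ ‖W₀‖ + (‖N 0‖ + K * ‖w‖) / lam := by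
  have hH : ∀ q ∈ Ici 0 ×ˢ Ici 0,
      ‖N (expWeight lam q • w q) - 0‖ ≤ (‖N 0‖ + K * ‖w‖) * expWeight lam q := fun q _ => by
    have hρq := one_le_expWeight hlam.le q
    have hNq : ‖N (expWeight lam q • w q)‖ ≤ ‖N 0‖ + K * ‖expWeight lam q • w q‖ :=
      calc ‖N (expWeight lam q • w q)‖ ≤ ‖N 0‖ + ‖N (expWeight lam q • w q) - N 0‖ :=
            norm_le_norm_add_norm_sub' _ _
        _ ≤ ‖N 0‖ + K * ‖expWeight lam q • w q‖ := by
            gcongr; simpa using hN.norm_sub_le (expWeight lam q • w q) 0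
    have h₁ := le_mul_of_one_le_right (norm_nonneg (N 0)) hρq
    have h₂ := mul_le_mul_of_nonneg_left (w.norm_coe_le_norm q)
      (by positivity : (0 : ℝ) ≤ K * expWeight lam q)
    rw [sub_zero]
    rw [norm_smul, Real.norm_of_nonneg (by linarith)] at hNq
    linarith
  have hI := norm_inv_expWeight_smul_mealyIntegral_sub_le (H₂ := 0)
    (hN.continuous.comp ((continuous_expWeight lam).smul w.continuous)).continuousOn
    continuousOn_const (by positivity) hlam hH p
  rw [mealyIntegral_zero, Pi.zero_apply, sub_zero] at hI
  rw [weightedPicard, smul_add]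
  refine (norm_add_le _ _).trans (add_le_add ?_ hI)
  calc ‖(expWeight lam p)⁻¹ • W₀ p‖ ≤ ‖W₀ p‖ := by
        rw [norm_smul, norm_inv, Real.norm_of_nonneg (expWeight_pos lam p).le]
        exact mul_le_of_le_one_left (norm_nonneg _)
          (inv_le_one_of_one_le₀ (one_le_expWeight hlam.le p))
    _ ≤ ‖W₀‖ := W₀.norm_coe_le_norm p

end weightedPicard

theorem exists_continuous_eq_add_mealyIntegral {N : ℝ × ℝ → ℝ × ℝ} {K : ℝ≥0}
    (hN : LipschitzWith K N) (W₀ : ℝ × ℝ →ᵇ ℝ × ℝ) :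
    ∃ W : ℝ × ℝ → ℝ × ℝ, Continuous W ∧ ∀ p, W p = W₀ p + mealyIntegral (N ∘ W) p := by
  set lam : ℝ := K + 1
  have hlam : 0 < lam := by positivity
  let T : (ℝ × ℝ →ᵇ ℝ × ℝ) → (ℝ × ℝ →ᵇ ℝ × ℝ) := fun w =>
    .ofNormedAddCommGroup (weightedPicard N W₀ lam w)
      (continuous_weightedPicard hN.continuous W₀.continuous w.continuous) _
      (norm_weightedPicard_le hN hlam W₀ w)
  have hT : ContractingWith (K / (K + 1)) T := by
    refine ⟨(div_lt_one (by positivity)).2 (lt_add_one K), LipschitzWith.of_dist_le_mul fun w w' =>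
      (dist_le (by positivity)).2 fun p => ?_⟩
    push_cast
    exact dist_weightedPicard_le hN hlam W₀ w w' p
  have : Nonempty (ℝ × ℝ →ᵇ ℝ × ℝ) := ⟨0⟩
  set w := ContractingWith.fixedPoint T hT
  have hw : ∀ p, weightedPicard N W₀ lam w p = w p := fun p =>
    congrArg (· p) (ContractingWith.fixedPoint_isFixedPt hT)
  refine ⟨fun q => expWeight lam q • w q,
    (continuous_expWeight lam).smul w.continuous, fun p => ?_⟩
  change expWeight lam p • w p = _
  rw [← hw p, weightedPicard, smul_inv_smul₀ (expWeight_pos lam p).ne']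
  rfl

def mealyField (f g : ℝ → ℝ → ℝ) (w : ℝ × ℝ) : ℝ × ℝ := (f w.2 w.1 - w.1, g w.2 w.1 - w.2)

lemma exists_lipschitzWith_mealyField {f g : ℝ → ℝ → ℝ} {Kf Kg : ℝ≥0}
    (hf : LipschitzWith Kf (Function.uncurry f)) (hg : LipschitzWith Kg (Function.uncurry g)) :
    ∃ K, LipschitzWith K (mealyField f g) := by
  have hswap : LipschitzWith (max 1 1) (Prod.swap : ℝ × ℝ → ℝ × ℝ) :=
    LipschitzWith.prod_snd.prodMk LipschitzWith.prod_fst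
  exact ⟨_, ((hf.comp hswap).sub LipschitzWith.prod_fst).prodMk
    ((hg.comp hswap).sub LipschitzWith.prod_snd)⟩

namespace IsMealySolution

variable {f g : ℝ → ℝ → ℝ} {u₀ v₀ : ℝ → ℝ} {u v : ℝ → ℝ → ℝ}

lemma eq_add_mealyIntegral (hfg : Continuous (mealyField f g))
    (h : IsMealySolution f g u₀ v₀ u v) :
    ∀ p ∈ Ici 0 ×ˢ Ici 0, (u p.1 p.2, v p.1 p.2) = (u₀ p.1, v₀ p.2) +
      mealyIntegral (mealyField f g ∘ fun q => (u q.1 q.2, v q.1 q.2)) p := by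
  obtain ⟨hu, hv, hu₀, hv₀, hus, hvx⟩ := h
  have hF : ContinuousOn (mealyField f g ∘ fun q => (u q.1 q.2, v q.1 q.2)) (Ici 0 ×ˢ Ici 0) :=
    hfg.comp_continuousOn (hu.prodMk hv)
  rintro ⟨x, s⟩ ⟨hx, hs⟩
  rw [mealyIntegral_of_nonneg _ hx hs, Prod.mk_add_mk, ← hu₀ x hx, ← hv₀ s hs]
  exact Prod.ext
    (eq_add_integral_of_hasDerivWithinAt (continuous_fst.comp_continuousOn (hF.along_snd hx))
      (hus x hx) hs)
    (eq_add_integral_of_hasDerivWithinAt (continuous_snd.comp_continuousOn (hF.along_fst hs))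
      (fun y hy => hvx y hy s hs) hx)

theorem unique {Kf Kg : ℝ≥0} (hf : LipschitzWith Kf (Function.uncurry f))
    (hg : LipschitzWith Kg (Function.uncurry g)) {u' v' : ℝ → ℝ → ℝ}
    (h : IsMealySolution f g u₀ v₀ u v) (h' : IsMealySolution f g u₀ v₀ u' v') :
    ∀ x : ℝ, 0 ≤ x → ∀ s : ℝ, 0 ≤ s → u x s = u' x s ∧ v x s = v' x s := by
  obtain ⟨K, hN⟩ := exists_lipschitzWith_mealyField hf hg
  intro x hx s hs
  exact Prod.ext_iff.1 <| eqOn_of_eq_add_mealyIntegral hN (h.1.prodMk h.2.1) (h'.1.prodMk h'.2.1)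
    (h.eq_add_mealyIntegral hN.continuous) (h'.eq_add_mealyIntegral hN.continuous)
    (mk_mem_prod hx hs)

theorem mem_Icc {lo hi : ℝ} (h : IsMealySolution f g u₀ v₀ u v)
    (hf : ∀ a, lo < f a lo ∧ f a hi < hi) (hg : ∀ a, lo < g lo a ∧ g hi a < hi)
    (hu₀ : ∀ x : ℝ, 0 ≤ x → u₀ x ∈ Icc lo hi) (hv₀ : ∀ s : ℝ, 0 ≤ s → v₀ s ∈ Icc lo hi) :
    ∀ x : ℝ, 0 ≤ x → ∀ s : ℝ, 0 ≤ s → u x s ∈ Icc lo hi ∧ v x s ∈ Icc lo hi := by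
  obtain ⟨-, -, hu0, hv0, hus, hvx⟩ := h
  intro x hx s hs
  constructor
  · refine mem_Icc_of_hasDerivWithinAt (hus x hx) (hu0 x hx ▸ hu₀ x hx) (fun t _ ht => ?_)
      (fun t _ ht => ?_) hs
    · rw [ht, sub_pos]; exact (hf _).1
    · rw [ht, sub_neg]; exact (hf _).2
  · refine mem_Icc_of_hasDerivWithinAt (fun y hy => hvx y hy s hs) (hv0 s hs ▸ hv₀ s hs)
      (fun y _ hy => ?_) (fun y _ hy => ?_) hx
    · rw [hy, sub_pos]; exact (hg _).1
    · rw [hy, sub_neg]; exact (hg _).2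

theorem congr_rhs {f' g' : ℝ → ℝ → ℝ} (h : IsMealySolution f g u₀ v₀ u v)
    (hf : ∀ x : ℝ, 0 ≤ x → ∀ s : ℝ, 0 ≤ s → f (v x s) (u x s) = f' (v x s) (u x s))
    (hg : ∀ x : ℝ, 0 ≤ x → ∀ s : ℝ, 0 ≤ s → g (v x s) (u x s) = g' (v x s) (u x s)) :
    IsMealySolution f' g' u₀ v₀ u v := by
  obtain ⟨hu, hv, hu0, hv0, hus, hvx⟩ := h
  exact ⟨hu, hv, hu0, hv0, fun x hx s hs => hf x hx s hs ▸ hus x hx s hs,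
    fun x hx s hs => hg x hx s hs ▸ hvx x hx s hs⟩

end IsMealySolution

theorem isMealySolution_of_eq_add_mealyIntegral {f g : ℝ → ℝ → ℝ} {u₀ v₀ : ℝ → ℝ}
    (hfg : Continuous (mealyField f g)) {W : ℝ × ℝ → ℝ × ℝ} (hW : Continuous W)
    (hWeq : ∀ p ∈ Ici 0 ×ˢ Ici 0, W p = (u₀ p.1, v₀ p.2) + mealyIntegral (mealyField f g ∘ W) p) :
    IsMealySolution f g u₀ v₀ (fun x s => (W (x, s)).1) (fun x s => (W (x, s)).2) := by
  have hF : Continuous (mealyField f g ∘ W) := hfg.comp hW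
  have hWeq' : ∀ x s : ℝ, 0 ≤ x → 0 ≤ s → W (x, s) =
      (u₀ x + ∫ t in (0 : ℝ)..s, (mealyField f g (W (x, t))).1,
        v₀ s + ∫ y in (0 : ℝ)..x, (mealyField f g (W (y, s))).2) := fun x s hx hs =>
    (hWeq (x, s) ⟨hx, hs⟩).trans (by rw [mealyIntegral_of_nonneg _ hx hs]; rfl)
  refine ⟨(continuous_fst.comp hW).continuousOn, (continuous_snd.comp hW).continuousOn,
    fun x hx => by simp [hWeq' x 0 hx le_rfl], fun s hs => by simp [hWeq' 0 s le_rfl hs],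
    fun x hx s hs => ?_, fun x hx s hs => ?_⟩
  · exact hasDerivWithinAt_of_eq_add_integral (φ := fun t => (W (x, t)).1) (c := u₀ x)
      (hF.comp (by fun_prop : Continuous fun t : ℝ => (x, t))).fst
      (fun t ht => by rw [hWeq' x t hx ht]; rfl) hs
  · exact hasDerivWithinAt_of_eq_add_integral (φ := fun y => (W (y, s)).2) (c := v₀ s)
      (hF.comp (by fun_prop : Continuous fun y : ℝ => (y, s))).snd
      (fun y hy => by rw [hWeq' y s hy hs]; rfl) hx

theorem exists_isMealySolution {f g : ℝ → ℝ → ℝ} {Kf Kg : ℝ≥0}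
    (hf : LipschitzWith Kf (Function.uncurry f)) (hg : LipschitzWith Kg (Function.uncurry g))
    {u₀ v₀ : ℝ → ℝ} (hu₀ : ContinuousOn u₀ (Ici 0)) (hv₀ : ContinuousOn v₀ (Ici 0)) {C : ℝ}
    (hu₀C : ∀ x : ℝ, 0 ≤ x → ‖u₀ x‖ ≤ C) (hv₀C : ∀ s : ℝ, 0 ≤ s → ‖v₀ s‖ ≤ C) :
    ∃ u v : ℝ → ℝ → ℝ, IsMealySolution f g u₀ v₀ u v := by
  obtain ⟨K, hN⟩ := exists_lipschitzWith_mealyField hf hg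
  have hW₀ : Continuous fun p : ℝ × ℝ => (u₀ (max p.1 0), v₀ (max p.2 0)) :=
    (hu₀.comp_continuous (by fun_prop) fun p => le_max_right p.1 0).prodMk
      (hv₀.comp_continuous (by fun_prop) fun p => le_max_right p.2 0)
  obtain ⟨W, hW, hWeq⟩ := exists_continuous_eq_add_mealyIntegral hN
    (.ofNormedAddCommGroup _ hW₀ C fun p =>
      norm_prod_le_iff.2 ⟨hu₀C _ (le_max_right _ _), hv₀C _ (le_max_right _ _)⟩)
  refine ⟨_, _, isMealySolution_of_eq_add_mealyIntegral hN.continuous hW fun p hp => ?_⟩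
  rw [hWeq p, BoundedContinuousFunction.coe_ofNormedAddCommGroup, max_eq_left hp.1,
    max_eq_left hp.2]

/-- existence, bounds and uniqueness for the hyperbolic Mealy system when
`(f, g)` is Lipschitz and restricts to a self-dynamics over `[r, R]`. -/
theorem statement18 (f g : ℝ → ℝ → ℝ)
    (hf : ∃ L : NNReal, LipschitzWith L (Function.uncurry f))
    (hg : ∃ L : NNReal, LipschitzWith L (Function.uncurry g))
    (r R q : ℝ) (hself : RestrictsToSelfDynamics f g r R q)
    (u₀ v₀ : ℝ → ℝ)
    (hu₀ : ContinuousOn u₀ (Set.Ici 0)) (hv₀ : ContinuousOn v₀ (Set.Ici 0))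
    (hu₀r : ∀ x : ℝ, 0 ≤ x → u₀ x ∈ Set.Icc (r + q) (R - q))
    (hv₀r : ∀ s : ℝ, 0 ≤ s → v₀ s ∈ Set.Icc (r + q) (R - q)) :
    (∃ u v : ℝ → ℝ → ℝ, IsMealySolution f g u₀ v₀ u v ∧
      ∀ x : ℝ, 0 ≤ x → ∀ s : ℝ, 0 ≤ s →
        u x s ∈ Set.Icc (r + q) (R - q) ∧ v x s ∈ Set.Icc (r + q) (R - q)) ∧
    (∀ u1 v1 u2 v2 : ℝ → ℝ → ℝ,
      IsMealySolution f g u₀ v₀ u1 v1 → IsMealySolution f g u₀ v₀ u2 v2 →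
      ∀ x : ℝ, 0 ≤ x → ∀ s : ℝ, 0 ≤ s → u1 x s = u2 x s ∧ v1 x s = v2 x s) := by
  obtain ⟨hq, hqr, hlo, hhi, -⟩ := hself
  obtain ⟨Kf, hKf⟩ := hf
  obtain ⟨Kg, hKg⟩ := hg
  have hc : 0 < r + q := by linarith
  set f' : ℝ → ℝ → ℝ := fun a b => f (max a (r + q)) b
  set g' : ℝ → ℝ → ℝ := fun a b => g a (max b (r + q))
  have hf' : LipschitzWith (Kf * max 1 1) (Function.uncurry f') :=
    hKf.comp (LipschitzWith.prod_fst.max_const _ |>.prodMk LipschitzWith.prod_snd)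
  have hg' : LipschitzWith (Kg * max 1 1) (Function.uncurry g') :=
    hKg.comp (LipschitzWith.prod_fst.prodMk (LipschitzWith.prod_snd.max_const _))
  have hpos (a : ℝ) : 0 < max a (r + q) := hc.trans_le (le_max_right _ _)
  have hnorm {a : ℝ} (ha : a ∈ Icc (r + q) (R - q)) : ‖a‖ ≤ R - q := by
    rw [Real.norm_of_nonneg (hc.le.trans ha.1)]; exact ha.2
  obtain ⟨u, v, hsol⟩ := exists_isMealySolution hf' hg' hu₀ hv₀
    (fun x hx => hnorm (hu₀r x hx)) (fun s hs => hnorm (hv₀r s hs))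
  have hinward (a : ℝ) : (r + q < f' a (r + q) ∧ f' a (R - q) < R - q) ∧
      (r + q < g' (r + q) a ∧ g' (R - q) a < R - q) := by
    have hl := hlo _ _ (hpos a) le_rfl
    have hh := hhi _ _ (hpos a) le_rfl
    exact ⟨⟨by linarith [hl.1], by linarith [hh.1]⟩, ⟨by linarith [hl.2], by linarith [hh.2]⟩⟩
  have hmem := hsol.mem_Icc (fun a => (hinward a).1) (fun a => (hinward a).2) hu₀r hv₀r
  refine ⟨⟨u, v, hsol.congr_rhs (fun x hx s hs => ?_) (fun x hx s hs => ?_), hmem⟩,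
    fun _ _ _ _ h₁ h₂ => h₁.unique hKf hKg h₂⟩
  · simp only [f', max_eq_left (hmem x hx s hs).2.1]
  · simp only [g', max_eq_left (hmem x hx s hs).1.1]
end

section
/- Let f, g : ℝ² → ℝ be differentiable and let u, v : [0,∞) × [0,∞) → ℝ be C² functions satisfying ∂u/∂s = f(v,u) − u and ∂v/∂x = g(v,u) − v everywhere. Suppose there are constants 0 < c ≤ a with −a ≤ (∂f/∂u)(v,u) − 1 ≤ −c and −a ≤ (∂g/∂v)(v,u) − 1 ≤ −c for all (v,u) ∈ ℝ², and constants b, d ≥ 0 with |(∂f/∂v)(v(x,s),u(x,s))·(g(v(x,s),u(x,s)) − v(x,s))| ≤ b and |(∂g/∂u)(v(x,s),u(x,s))·(f(v(x,s),u(x,s)) − u(x,s))| ≤ d for all (x,s). Then for all (x,s): |∂u/∂x(x,s)| ≤ b/c + (|∂u/∂x(x,0)| − b/c)·exp(−c·s) and |∂v/∂s(x,s)| ≤ d/c + (|∂v/∂s(0,s)| − d/c)·exp(−c·x). In particular, if |∂u/∂x(·,0)| and |∂v/∂s(0,·)| are bounded on [0,∞), then ∂u/∂x and ∂v/∂s are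 uniformly bounded on [0,∞) × [0,∞). -/
/-!
Differentiating the first equation in `x` and using the symmetry of second derivatives shows that
`w = ∂u/∂x` satisfies, along each vertical line `x = const`, the linear equation
`∂w/∂s = (∂f/∂u − 1) w + (∂f/∂v)(g − v)`, whose coefficient is `≤ −c` and whose forcing term is
bounded by `b`. A comparison argument with the solution of `y' = −c y + b` then bounds `|w|`.
The estimate for `∂v/∂s` is the same statement for the system with the roles of `x` and `s`
(and of `f, u` and `g, v`) exchanged.
-/

open Set Real Function

lemma gronwallBound_nonneg {δ K ε x : ℝ} (hδ : 0 ≤ δ) (hε : 0 ≤ ε) (hx : 0 ≤ x) :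
    0 ≤ gronwallBound δ K ε x := by
  unfold gronwallBound
  split_ifs with hK
  · positivity
  · have : 0 ≤ ε / K * (exp (K * x) - 1) := by
      rcases lt_or_gt_of_ne hK with hK | hK
      · exact mul_nonneg_of_nonpos_of_nonpos (div_nonpos_of_nonneg_of_nonpos hε hK.le)
          (sub_nonpos.2 (exp_le_one_iff.2 (mul_nonpos_of_nonpos_of_nonneg hK.le hx)))
      · exact mul_nonneg (div_nonneg hε hK.le)
          (sub_nonneg.2 (one_le_exp (mul_nonneg hK.le hx)))
    positivity

section LinearComparison

variable {w lam r : ℝ → ℝ} {δ K ε : ℝ}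

theorem le_gronwallBound_of_hasDerivAt_linear (hδ : 0 ≤ δ) (hε : 0 ≤ ε)
    (hw : ∀ t, 0 ≤ t → HasDerivAt w (lam t * w t + r t) t)
    (hlam : ∀ t, 0 ≤ t → lam t ≤ K) (hr : ∀ t, 0 ≤ t → r t ≤ ε) (h0 : w 0 ≤ δ) :
    ∀ t, 0 ≤ t → w t ≤ gronwallBound δ K ε t := by
  intro t ht
  -- Compare strictly with the bound for every `ε' > ε`, then let `ε' → ε`.
  have hstrict : ∀ ε' ∈ Ioi ε, w t ≤ gronwallBound δ K ε' t := by
    intro ε' hε'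
    refine image_le_of_deriv_right_lt_deriv_boundary (a := 0)
      (fun x hx => (hw x hx.1).continuousAt.continuousWithinAt)
      (fun x hx => (hw x hx.1).hasDerivWithinAt) (by rwa [gronwallBound_x0])
      (hasDerivAt_gronwallBound δ K ε') ?_ ⟨ht, le_rfl⟩
    -- At a touching point `w = B ≥ 0`, so `lam * w ≤ K * w`.
    intro x hx hwx
    have hB := gronwallBound_nonneg (K := K) hδ (hε.trans (le_of_lt hε')) hx.1
    have hlamB := mul_le_mul_of_nonneg_right (hlam x hx.1) hB
    rw [hwx]
    linarith [hr x hx.1, mem_Ioi.1 hε']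
  exact continuousWithinAt_const.closure_le (g := fun ε' => gronwallBound δ K ε' t)
    (by simp [closure_Ioi]) (gronwallBound_continuous_ε δ K t).continuousWithinAt hstrict

theorem abs_le_gronwallBound_of_hasDerivAt_linear
    (hw : ∀ t, 0 ≤ t → HasDerivAt w (lam t * w t + r t) t)
    (hlam : ∀ t, 0 ≤ t → lam t ≤ K) (hr : ∀ t, 0 ≤ t → |r t| ≤ ε) :
    ∀ t, 0 ≤ t → |w t| ≤ gronwallBound |w 0| K ε t := by
  have hε : 0 ≤ ε := (abs_nonneg _).trans (hr 0 le_rfl)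
  have hneg : ∀ t, 0 ≤ t → HasDerivAt (-w) (lam t * (-w) t + -r t) t := fun t ht =>
    (hw t ht).neg.congr_deriv (by simp only [Pi.neg_apply]; ring)
  intro t ht
  refine abs_le.2 ⟨?_, ?_⟩
  · have := le_gronwallBound_of_hasDerivAt_linear (abs_nonneg _) hε hneg hlam
      (fun t ht => (neg_le_abs (r t)).trans (hr t ht)) (neg_le_abs (w 0)) t ht
    simp only [Pi.neg_apply] at this
    linarith
  · exact le_gronwallBound_of_hasDerivAt_linear (abs_nonneg _) hε hw hlam
      (fun t ht => le_of_abs_le (hr t ht)) (le_abs_self (w 0)) t ht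

end LinearComparison

lemma gronwallBound_neg {δ c ε : ℝ} (hc : c ≠ 0) (t : ℝ) :
    gronwallBound δ (-c) ε t = ε / c + (δ - ε / c) * exp (-c * t) := by
  rw [gronwallBound_of_K_ne_0 (neg_ne_zero.2 hc), div_neg]
  ring

lemma add_sub_mul_exp_le_max {β X A c t : ℝ} (hc : 0 ≤ c) (ht : 0 ≤ t) (hX : X ≤ A) :
    β + (X - β) * exp (-c * t) ≤ max β A := by
  have he0 : 0 < exp (-c * t) := exp_pos _
  have he1 : exp (-c * t) ≤ 1 := exp_le_one_iff.2 (by nlinarith)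
  nlinarith [le_max_left β A, le_max_right β A]

section PartialDerivatives

variable {E : Type*} [NormedAddCommGroup E] [NormedSpace ℝ E]

lemma HasFDerivAt.hasDerivAt_fst_slice {U : ℝ × ℝ → E} {L : ℝ × ℝ →L[ℝ] E} {x s : ℝ}
    (h : HasFDerivAt U L (x, s)) : HasDerivAt (fun x' => U (x', s)) (L (1, 0)) x := by
  simpa [comp_def] using h.comp_hasDerivAt x ((hasDerivAt_id x).prodMk (hasDerivAt_const x s))

lemma HasFDerivAt.hasDerivAt_snd_slice {U : ℝ × ℝ → E} {L : ℝ × ℝ →L[ℝ] E} {x s : ℝ}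
    (h : HasFDerivAt U L (x, s)) : HasDerivAt (fun s' => U (x, s')) (L (0, 1)) s := by
  simpa [comp_def] using h.comp_hasDerivAt s ((hasDerivAt_const s x).prodMk (hasDerivAt_id s))

lemma ContDiff.exists_hasDerivAt_fderiv_slices {U : ℝ × ℝ → E} (hU : ContDiff ℝ 2 U)
    (x s : ℝ) : ∃ D, HasDerivAt (fun s' => fderiv ℝ U (x, s') (1, 0)) D s ∧
      HasDerivAt (fun x' => fderiv ℝ U (x', s) (0, 1)) D x := by
  have hU' : HasFDerivAt (fderiv ℝ U) (fderiv ℝ (fderiv ℝ U) (x, s)) (x, s) :=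
    ((hU.fderiv_right (m := 1) (by norm_num)).differentiable one_ne_zero _).hasFDerivAt
  have hsymm := hU.contDiffAt.isSymmSndFDerivAt (x := (x, s))
    (by simp [minSmoothness_of_isRCLikeNormedField])
  refine ⟨fderiv ℝ (fderiv ℝ U) (x, s) (1, 0) (0, 1), ?_, ?_⟩
  · rw [hsymm]
    simpa using hU'.hasDerivAt_snd_slice.clm_apply (hasDerivAt_const s ((1 : ℝ), (0 : ℝ)))
  · simpa using hU'.hasDerivAt_fst_slice.clm_apply (hasDerivAt_const x ((0 : ℝ), (1 : ℝ)))

lemma hasDerivAt_comp_uncurry {f : ℝ → ℝ → ℝ} {p q : ℝ → ℝ} {p' q' x : ℝ}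
    (hf : DifferentiableAt ℝ (uncurry f) (p x, q x)) (hp : HasDerivAt p p' x)
    (hq : HasDerivAt q q' x) :
    HasDerivAt (fun y => f (p y) (q y))
      (deriv (fun w => f w (q x)) (p x) * p' + deriv (fun w => f (p x) w) (q x) * q') x := by
  have hL := hf.hasFDerivAt
  have hpq : ((p', q') : ℝ × ℝ) = p' • ((1 : ℝ), (0 : ℝ)) + q' • ((0 : ℝ), (1 : ℝ)) := by
    simp
  have := hL.comp_hasDerivAt x (hp.prodMk hq)
  rw [hpq, map_add, map_smul, map_smul, ← hL.hasDerivAt_fst_slice.deriv,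
    ← hL.hasDerivAt_snd_slice.deriv, smul_eq_mul, smul_eq_mul, mul_comm p', mul_comm q'] at this
  exact this

end PartialDerivatives

section Mealy

variable {f g u v : ℝ → ℝ → ℝ}

theorem hasDerivAt_deriv_fst_of_mealy (hf : Differentiable ℝ (uncurry f))
    (hu : ContDiff ℝ 2 (fun pt : ℝ × ℝ => u pt.1 pt.2))
    (hueq : ∀ x s : ℝ, 0 ≤ x → 0 ≤ s →
      HasDerivAt (fun s' => u x s') (f (v x s) (u x s) - u x s) s)
    (hveq : ∀ x s : ℝ, 0 ≤ x → 0 ≤ s →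
      HasDerivAt (fun x' => v x' s) (g (v x s) (u x s) - v x s) x)
    {x s : ℝ} (hx : 0 ≤ x) (hs : 0 ≤ s) :
    HasDerivAt (fun s' => deriv (fun x' => u x' s') x)
      ((deriv (fun w => f (v x s) w) (u x s) - 1) * deriv (fun x' => u x' s) x
        + deriv (fun w => f w (u x s)) (v x s) * (g (v x s) (u x s) - v x s)) s := by
  set U : ℝ × ℝ → ℝ := fun pt => u pt.1 pt.2
  have hUdiff : Differentiable ℝ U := hu.differentiable (by norm_num)
  have hux : ∀ x' s', HasDerivAt (fun x'' => u x'' s') (fderiv ℝ U (x', s') (1, 0)) x' :=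
    fun x' s' => (hUdiff (x', s')).hasFDerivAt.hasDerivAt_fst_slice
  have hus : ∀ x', x ≤ x' → fderiv ℝ U (x', s) (0, 1) = f (v x' s) (u x' s) - u x' s :=
    fun x' hx' => (hUdiff (x', s)).hasFDerivAt.hasDerivAt_snd_slice.unique
      (hueq x' s (hx.trans hx') hs)
  obtain ⟨D, hDs, hDx⟩ := hu.exists_hasDerivAt_fderiv_slices x s
  have hR := (hasDerivAt_comp_uncurry (hf _) (hveq x s hx hs) (hux x s)).sub (hux x s)
  -- `∂u/∂s = f(v,u) − u` only holds for `x ≥ 0`, so the mixed partial is identified from the right.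
  have hD : D = _ := (uniqueDiffWithinAt_Ici x).eq_deriv _
    (hDx.hasDerivWithinAt.congr (fun y hy => (hus y hy).symm) (hus x le_rfl).symm)
    hR.hasDerivWithinAt
  have hfun : (fun s' => deriv (fun x' => u x' s') x) = fun s' => fderiv ℝ U (x, s') (1, 0) :=
    funext fun s' => (hux x s').deriv
  rw [hfun, (hux x s).deriv]
  refine hDs.congr_deriv ?_
  rw [hD]
  ring

theorem abs_deriv_fst_le_of_mealy (hf : Differentiable ℝ (uncurry f))
    (hu : ContDiff ℝ 2 (fun pt : ℝ × ℝ => u pt.1 pt.2))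
    (hueq : ∀ x s : ℝ, 0 ≤ x → 0 ≤ s →
      HasDerivAt (fun s' => u x s') (f (v x s) (u x s) - u x s) s)
    (hveq : ∀ x s : ℝ, 0 ≤ x → 0 ≤ s →
      HasDerivAt (fun x' => v x' s) (g (v x s) (u x s) - v x s) x)
    {c b : ℝ} (hc : c ≠ 0)
    (hfu : ∀ x s : ℝ, 0 ≤ x → 0 ≤ s → deriv (fun w => f (v x s) w) (u x s) - 1 ≤ -c)
    (hbbound : ∀ x s : ℝ, 0 ≤ x → 0 ≤ s →
      |deriv (fun w => f w (u x s)) (v x s) * (g (v x s) (u x s) - v x s)| ≤ b)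
    {x s : ℝ} (hx : 0 ≤ x) (hs : 0 ≤ s) :
    |deriv (fun x' => u x' s) x|
      ≤ b / c + (|deriv (fun x' => u x' 0) x| - b / c) * exp (-c * s) := by
  rw [← gronwallBound_neg hc]
  exact abs_le_gronwallBound_of_hasDerivAt_linear
    (fun t ht => hasDerivAt_deriv_fst_of_mealy hf hu hueq hveq hx ht)
    (fun t ht => hfu x t hx ht) (fun t ht => hbbound x t hx ht) s hs

end Mealy

theorem statement19_general (f g : ℝ → ℝ → ℝ)
    (hf : Differentiable ℝ (Function.uncurry f))
    (hg : Differentiable ℝ (Function.uncurry g))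
    (u v : ℝ → ℝ → ℝ)
    (hu : ContDiff ℝ 2 (fun pt : ℝ × ℝ => u pt.1 pt.2))
    (hv : ContDiff ℝ 2 (fun pt : ℝ × ℝ => v pt.1 pt.2))
    (hueq : ∀ x s : ℝ, 0 ≤ x → 0 ≤ s →
      HasDerivAt (fun s' => u x s') (f (v x s) (u x s) - u x s) s)
    (hveq : ∀ x s : ℝ, 0 ≤ x → 0 ≤ s →
      HasDerivAt (fun x' => v x' s) (g (v x s) (u x s) - v x s) x)
    (a c : ℝ) (hc : 0 < c)
    (hfu : ∀ v' u' : ℝ, -a ≤ deriv (fun w => f v' w) u' - 1 ∧ deriv (fun w => f v' w) u' - 1 ≤ -c)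
    (hgv : ∀ v' u' : ℝ, -a ≤ deriv (fun w => g w u') v' - 1 ∧ deriv (fun w => g w u') v' - 1 ≤ -c)
    (b d : ℝ)
    (hbbound : ∀ x s : ℝ, 0 ≤ x → 0 ≤ s →
      |deriv (fun w => f w (u x s)) (v x s) * (g (v x s) (u x s) - v x s)| ≤ b)
    (hdbound : ∀ x s : ℝ, 0 ≤ x → 0 ≤ s →
      |deriv (fun w => g (v x s) w) (u x s) * (f (v x s) (u x s) - u x s)| ≤ d) :
    (∀ x s : ℝ, 0 ≤ x → 0 ≤ s →
      |deriv (fun x' => u x' s) x|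
          ≤ b / c + (|deriv (fun x' => u x' 0) x| - b / c) * Real.exp (-c * s) ∧
      |deriv (fun s' => v x s') s|
          ≤ d / c + (|deriv (fun s' => v 0 s') s| - d / c) * Real.exp (-c * x)) ∧
    ((∃ A : ℝ, ∀ x : ℝ, 0 ≤ x → |deriv (fun x' => u x' 0) x| ≤ A) →
     (∃ B : ℝ, ∀ s : ℝ, 0 ≤ s → |deriv (fun s' => v 0 s') s| ≤ B) →
     ∃ K : ℝ, ∀ x s : ℝ, 0 ≤ x → 0 ≤ s →
       |deriv (fun x' => u x' s) x| ≤ K ∧ |deriv (fun s' => v x s') s| ≤ K) := by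
  have hu_est {x s : ℝ} (hx : 0 ≤ x) (hs : 0 ≤ s) :=
    abs_deriv_fst_le_of_mealy hf hu hueq hveq hc.ne' (fun _ _ _ _ => (hfu _ _).2) hbbound hx hs
  have hv_est {x s : ℝ} (hx : 0 ≤ x) (hs : 0 ≤ s) :=
    abs_deriv_fst_le_of_mealy (f := fun p q => g q p) (g := fun p q => f q p)
      (u := fun x s => v s x) (v := fun x s => u s x)
      (hg.comp (differentiable_snd.prodMk differentiable_fst))
      (hv.comp (contDiff_snd.prodMk contDiff_fst))
      (fun x s hx hs => hveq s x hs hx) (fun x s hx hs => hueq s x hs hx)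
      hc.ne' (fun _ _ _ _ => (hgv _ _).2) (fun x s hx hs => hdbound s x hs hx) hs hx
  refine ⟨fun x s hx hs => ⟨hu_est hx hs, hv_est hx hs⟩, ?_⟩
  rintro ⟨A, hA⟩ ⟨B, hB⟩
  refine ⟨max (max (b / c) A) (max (d / c) B), fun x s hx hs => ⟨?_, ?_⟩⟩
  · exact (hu_est hx hs).trans
      ((add_sub_mul_exp_le_max hc.le hs (hA x hx)).trans (le_max_left _ _))
  · exact (hv_est hx hs).trans
      ((add_sub_mul_exp_le_max hc.le hx (hB s hs)).trans (le_max_right _ _))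

/-- energy estimates with negative coefficients for the hyperbolic Mealy
system `∂u/∂s = f(v,u) − u`, `∂v/∂x = g(v,u) − v` (first argument of `f`, `g` is `v`).
If `−a ≤ ∂f/∂u − 1 ≤ −c` and `−a ≤ ∂g/∂v − 1 ≤ −c` everywhere with `0 < c ≤ a`, and
`|∂f/∂v · (g − v)| ≤ b`, `|∂g/∂u · (f − u)| ≤ d` along the solution, then `∂u/∂x` and
`∂v/∂s` satisfy exponential decay estimates; in particular they are uniformly bounded
if they are bounded on the initial axes. -/
theorem statement19 (f g : ℝ → ℝ → ℝ)
    (hf : Differentiable ℝ (Function.uncurry f))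
    (hg : Differentiable ℝ (Function.uncurry g))
    (u v : ℝ → ℝ → ℝ)
    (hu : ContDiff ℝ 2 (fun pt : ℝ × ℝ => u pt.1 pt.2))
    (hv : ContDiff ℝ 2 (fun pt : ℝ × ℝ => v pt.1 pt.2))
    (hueq : ∀ x s : ℝ, 0 ≤ x → 0 ≤ s →
      HasDerivAt (fun s' => u x s') (f (v x s) (u x s) - u x s) s)
    (hveq : ∀ x s : ℝ, 0 ≤ x → 0 ≤ s →
      HasDerivAt (fun x' => v x' s) (g (v x s) (u x s) - v x s) x)
    (a c : ℝ) (hc : 0 < c) (hca : c ≤ a)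
    (hfu : ∀ v' u' : ℝ, -a ≤ deriv (fun w => f v' w) u' - 1 ∧ deriv (fun w => f v' w) u' - 1 ≤ -c)
    (hgv : ∀ v' u' : ℝ, -a ≤ deriv (fun w => g w u') v' - 1 ∧ deriv (fun w => g w u') v' - 1 ≤ -c)
    (b d : ℝ) (hb : 0 ≤ b) (hd : 0 ≤ d)
    (hbbound : ∀ x s : ℝ, 0 ≤ x → 0 ≤ s →
      |deriv (fun w => f w (u x s)) (v x s) * (g (v x s) (u x s) - v x s)| ≤ b)
    (hdbound : ∀ x s : ℝ, 0 ≤ x → 0 ≤ s →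
      |deriv (fun w => g (v x s) w) (u x s) * (f (v x s) (u x s) - u x s)| ≤ d) :
    (∀ x s : ℝ, 0 ≤ x → 0 ≤ s →
      |deriv (fun x' => u x' s) x|
          ≤ b / c + (|deriv (fun x' => u x' 0) x| - b / c) * Real.exp (-c * s) ∧
      |deriv (fun s' => v x s') s|
          ≤ d / c + (|deriv (fun s' => v 0 s') s| - d / c) * Real.exp (-c * x)) ∧
    ((∃ A : ℝ, ∀ x : ℝ, 0 ≤ x → |deriv (fun x' => u x' 0) x| ≤ A) →
     (∃ B : ℝ, ∀ s : ℝ, 0 ≤ s → |deriv (fun s' => v 0 s') s| ≤ B) →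
     ∃ K : ℝ, ∀ x s : ℝ, 0 ≤ x → 0 ≤ s →
       |deriv (fun x' => u x' s) x| ≤ K ∧ |deriv (fun s' => v x s') s| ≤ K) :=
  statement19_general f g hf hg u v hu hv hueq hveq a c hc hfu hgv b d hbbound hdbound
end
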